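/- Let G be a connected finite simple graph with a weight function c: V(G) → ℝ≥0, and let N = ∑_{v∈V(G)} c(v). If c(v) ≥ 1 for all v ∈ V(G), then the weighted average eccentricity satisfies avec_c(G) ≤ avec(P_{⌈N⌉}), where P_{⌈N⌉} is the path on ⌈N⌉ vertices. -/

import Mathlib

open SimpleGraph

/-- The eccentricity of a vertex `v`: the maximum distance from `v` to a vertex of `G`. -/
noncomputable def eccent {V : Type*} (G : SimpleGraph V) (v : V) : ℕ :=
  sSup (Set.range (G.dist v))

/-- The average eccentricity of a finite graph `G`. -/
noncomputable def avec {V : Type*} (G : SimpleGraph V) : ℝ :=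
  (∑ᶠ v, (eccent G v : ℝ)) / (Nat.card V)

/-- `G` contains no cycle of length `m` as a (not necessarily induced) subgraph. -/
def CycleFree {V : Type*} (G : SimpleGraph V) (m : ℕ) : Prop :=
  ∀ ⦃v : V⦄ (w : G.Walk v v), w.IsCycle → w.length ≠ m

/-!
Let `u` be a vertex of maximum eccentricity `d` in a connected graph on `n` vertices. Deleting `u`
leaves a connected graph and raises every other eccentricity by at most one, and not at all for the
vertices `v` with `2 d(u, v) ≤ d`, of which a geodesic from `u` supplies `⌊d/2⌋ + 1`. By induction
on `n`, the total eccentricity is then at most `P(n) = ∑ᵢ max(i, n - 1 - i)`, that of the path `Pₙ`.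

For the weights, `c ≥ 1` turns `∑ c(v) e(v) = N d - ∑ c(v) (d - e(v))` into the bound
`N d - (n d - P(n))`, and `P(m) - m d` increases for `m > d`, so with `m = ⌈N⌉` the weighted sum is
at most both `N d` and `N d - (m d - P(m))`. The claimed bound `N P(m) / m` is the convex
combination of these two with weights `1 - N/m` and `N/m`.
-/

open Finset

def pathEccSum (n : ℕ) : ℕ := ∑ i ∈ range n, max i (n - 1 - i)

lemma pathEccSum_succ (k : ℕ) : pathEccSum (k + 1) = pathEccSum k + k + (k + 1) / 2 := by
  have hterm : ∀ i ∈ range k, max i (k - i) = max i (k - 1 - i) + if 2 * i < k then 1 else 0 := by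
    intro i hi
    split_ifs <;> omega
  have hcount : #{i ∈ range k | 2 * i < k} = (k + 1) / 2 := by
    rw [← card_range ((k + 1) / 2)]
    congr 1
    ext i
    simp only [mem_filter, mem_range]
    omega
  rw [pathEccSum, sum_range_succ, Nat.add_sub_cancel, sum_congr rfl hterm, sum_add_distrib,
    sum_boole, hcount, pathEccSum, Nat.sub_self, max_eq_left k.zero_le, Nat.cast_id]
  ring

lemma pathEccSum_add_mul_le {d n m : ℕ} (hdn : d < n) (hnm : n ≤ m) :
    pathEccSum n + m * d ≤ pathEccSum m + n * d := by
  induction m, hnm using Nat.le_induction with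
  | base => rfl
  | succ j hnj ih =>
    rw [pathEccSum_succ, add_one_mul]
    omega

section Eccentricity

variable {V : Type*} {G : SimpleGraph V}

lemma dist_le_eccent [Finite V] (v w : V) : G.dist v w ≤ _root_.eccent G v :=
  le_csSup (Set.finite_range _).bddAbove ⟨w, rfl⟩

lemma eccent_le_of_forall_dist_le {v : V} {k : ℕ} (h : ∀ w, G.dist v w ≤ k) :
    _root_.eccent G v ≤ k :=
  have : Nonempty V := ⟨v⟩
  csSup_le (Set.range_nonempty _) (Set.forall_mem_range.2 h)

lemma exists_dist_eq_eccent [Finite V] (v : V) : ∃ w, G.dist v w = _root_.eccent G v :=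
  have : Nonempty V := ⟨v⟩
  (Set.range_nonempty _).csSup_mem (Set.finite_range _)

lemma SimpleGraph.Connected.exists_dist_eq_of_le_eccent [Finite V] (hG : G.Connected) (u : V)
    {i : ℕ} (hi : i ≤ _root_.eccent G u) : ∃ v, G.dist u v = i := by
  obtain ⟨w, hw⟩ := exists_dist_eq_eccent (G := G) u
  obtain ⟨p, hp⟩ := hG.exists_walk_length_eq_dist u w
  refine ⟨p.getVert i, le_antisymm ?_ ?_⟩
  · exact (by simpa using G.dist_le (p.take i) : _ ∧ _).1
  · have htake := G.dist_le (p.drop i)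
    have := hG.dist_triangle (u := u) (v := p.getVert i) (w := w)
    rw [Walk.drop_length] at htake
    omega

lemma SimpleGraph.Connected.eccent_lt_card [Fintype V] (hG : G.Connected) (u : V) :
    _root_.eccent G u < Fintype.card V := by
  obtain ⟨w, hw⟩ := exists_dist_eq_eccent (G := G) u
  obtain ⟨p, hpath, hp⟩ := hG.exists_path_of_dist u w
  rw [← hw, ← hp]
  exact hpath.length_lt

end Eccentricity

lemma SimpleGraph.Reachable.dist_map_le {V W : Type*} {G : SimpleGraph V} {H : SimpleGraph W}
    (f : G →g H) {u v : V} (h : G.Reachable u v) : H.dist (f u) (f v) ≤ G.dist u v := by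
  obtain ⟨p, hp⟩ := h.exists_walk_length_eq_dist
  rw [← hp, ← p.length_map f]
  exact dist_le _

section DeleteVertex

variable {V : Type*} [Finite V] {G : SimpleGraph V}

lemma dist_le_eccent_induce {s : Set V} (hs : (G.induce s).Connected) (v z : s) :
    G.dist v z ≤ _root_.eccent (G.induce s) v :=
  ((hs.preconnected v z).dist_map_le (Embedding.induce s).toHom).trans (dist_le_eccent v z)

lemma eccent_le_of_eccent_induce_le {s : Set V} (hs : (G.induce s).Connected) (v : s) {k : ℕ}
    (hk : _root_.eccent (G.induce s) v ≤ k) (hout : ∀ z ∉ s, G.dist v z ≤ k) :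
    _root_.eccent G v ≤ k := by
  refine eccent_le_of_forall_dist_le fun z ↦ ?_
  by_cases hz : z ∈ s
  · exact (dist_le_eccent_induce hs v ⟨z, hz⟩).trans hk
  · exact hout z hz

variable {u : V}

lemma eccent_le_eccent_induce_add_one (hG : G.Connected)
    (hGu : (G.induce {x | x ≠ u}).Connected) (v : {x | x ≠ u}) :
    _root_.eccent G v ≤ _root_.eccent (G.induce {x | x ≠ u}) v + 1 := by
  have : Nontrivial V := nontrivial_of_ne _ _ v.2
  obtain ⟨y, hy⟩ := hG.preconnected.exists_adj_of_nontrivial u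
  refine eccent_le_of_eccent_induce_le hGu v (Nat.le_succ _) fun z hz ↦ ?_
  obtain rfl : z = u := not_not.1 hz
  calc G.dist v z ≤ G.dist v y + G.dist y z := hG.dist_triangle
    _ ≤ _ := add_le_add (dist_le_eccent_induce hGu v ⟨y, hy.ne'⟩) (dist_eq_one_iff_adj.2 hy.symm).le

lemma eccent_le_eccent_induce_of_two_mul_dist_le (hG : G.Connected)
    (hGu : (G.induce {x | x ≠ u}).Connected) (v : {x | x ≠ u})
    (hv : 2 * G.dist u v ≤ _root_.eccent G u) :
    _root_.eccent G v ≤ _root_.eccent (G.induce {x | x ≠ u}) v := by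
  obtain ⟨w, hw⟩ := exists_dist_eq_eccent (G := G) u
  have hvu := (hG.preconnected u v).pos_dist_of_ne (Ne.symm v.2)
  have hwu : w ≠ u := by
    intro hwu
    rw [hwu, dist_self] at hw
    omega
  refine eccent_le_of_eccent_induce_le hGu v le_rfl fun z hz ↦ ?_
  obtain rfl : z = u := not_not.1 hz
  have hvw : G.dist v w ≤ _ := dist_le_eccent_induce hGu v ⟨w, hwu⟩
  have := hG.dist_triangle (u := z) (v := v) (w := w)
  rw [dist_comm]
  omega

/-- A shortest walk from `x` through `u` to a vertex farthest from `u` would be longer than the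
eccentricity of `x`. -/
lemma SimpleGraph.Connected.induce_ne_of_forall_eccent_le [Nontrivial V] (hG : G.Connected)
    (hu : ∀ v, _root_.eccent G v ≤ _root_.eccent G u) : (G.induce {x | x ≠ u}).Connected := by
  classical
  obtain ⟨w, hw⟩ := exists_dist_eq_eccent (G := G) u
  obtain ⟨v, hv⟩ := exists_ne u
  have hwu : w ≠ u := by
    intro hwu
    have := (hG.preconnected u v).pos_dist_of_ne hv.symm
    have := dist_le_eccent (G := G) u v
    rw [hwu, dist_self] at hw
    omega
  refine (connected_iff_exists_forall_reachable _).2 ⟨⟨w, hwu⟩, fun x ↦ Reachable.symm ?_⟩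
  obtain ⟨p, hp⟩ := hG.exists_walk_length_eq_dist x w
  by_cases hpu : u ∈ p.support
  · have hsplit := congrArg Walk.length (p.take_spec hpu)
    rw [Walk.length_append] at hsplit
    have := G.dist_le (p.takeUntil u hpu)
    have := G.dist_le (p.dropUntil u hpu)
    have := (hG.preconnected x u).pos_dist_of_ne x.2
    have := dist_le_eccent (G := G) x w
    have := hu x
    omega
  · exact (p.induce {x | x ≠ u} fun y hy hyu ↦ hpu (hyu ▸ hy)).reachable

end DeleteVertex

lemma SimpleGraph.Connected.eccent_div_two_lt_card_filter {V : Type*} [Fintype V] [DecidableEq V]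
    {G : SimpleGraph V} (hG : G.Connected) (u : V) :
    _root_.eccent G u / 2 < #{v | 2 * G.dist u v ≤ _root_.eccent G u} := by
  have : Nonempty V := ⟨u⟩
  choose! f hf using fun i (hi : i ≤ _root_.eccent G u) ↦ hG.exists_dist_eq_of_le_eccent u hi
  rw [Nat.lt_iff_add_one_le, ← card_range (_root_.eccent G u / 2 + 1)]
  refine card_le_card_of_injOn f (fun i hi ↦ ?_) fun i hi j hj hij ↦ ?_
  · simp only [coe_range, Set.mem_Iio] at hi
    simp only [coe_filter, mem_univ, true_and, Set.mem_ofPred_eq]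
    rw [hf i (by omega)]
    omega
  · simp only [coe_range, Set.mem_Iio] at hi hj
    rw [← hf i (by omega), ← hf j (by omega), hij]

lemma sum_eccent_le_sum_eccent_induce_add {V : Type*} [Fintype V] [DecidableEq V]
    {G : SimpleGraph V} {u : V} (hG : G.Connected) (hGu : (G.induce {x | x ≠ u}).Connected) :
    ∑ v, _root_.eccent G v ≤ ∑ x : {x | x ≠ u}, _root_.eccent (G.induce {x | x ≠ u}) x
      + (Fintype.card V - 1) + Fintype.card V / 2 := by
  set d := _root_.eccent G u
  let far : V → ℕ := fun v ↦ if d < 2 * G.dist u v then 1 else 0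
  have hpt (x : {x | x ≠ u}) :
      _root_.eccent G x ≤ _root_.eccent (G.induce {x | x ≠ u}) x + far x := by
    by_cases h : d < 2 * G.dist u x
    · simpa [far, h] using eccent_le_eccent_induce_add_one hG hGu x
    · simpa [far, h] using eccent_le_eccent_induce_of_two_mul_dist_le hG hGu x (not_lt.1 h)
  have hfar : ∑ v, far v + #{v | 2 * G.dist u v ≤ d} = Fintype.card V := by
    simp only [far, sum_boole, Nat.cast_id, ← not_lt]
    exact card_filter_add_card_filter_not _
  have hnear : d / 2 + 1 ≤ #{v | 2 * G.dist u v ≤ d} := hG.eccent_div_two_lt_card_filter u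
  have hd : d < Fintype.card V := hG.eccent_lt_card u
  calc ∑ v, _root_.eccent G v = d + ∑ x : {x // x ≠ u}, _root_.eccent G x :=
        Fintype.sum_eq_add_sum_subtype_ne _ u
    _ ≤ d + ∑ x : {x | x ≠ u}, (_root_.eccent (G.induce {x | x ≠ u}) x + far x) := by
        gcongr with x
        exact hpt x
    _ = d + ∑ x : {x | x ≠ u}, _root_.eccent (G.induce {x | x ≠ u}) x + ∑ v, far v := by
        have hfar_u : far u = 0 := by simp [far]
        rw [sum_add_distrib, Fintype.sum_eq_add_sum_subtype_ne far u, hfar_u, zero_add, add_assoc]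
        rfl
    _ ≤ _ := by omega

theorem sum_eccent_le_pathEccSum {V : Type*} [Fintype V] {G : SimpleGraph V}
    (hG : G.Connected) : ∑ v, _root_.eccent G v ≤ pathEccSum (Fintype.card V) := by
  revert G
  refine Fintype.induction_subsingleton_or_nontrivial (P := fun V _ ↦ ∀ {G : SimpleGraph V},
    G.Connected → ∑ v, _root_.eccent G v ≤ pathEccSum (Fintype.card V)) V ?_ ?_
  · intro V _ _ G _
    refine (sum_eq_zero fun v _ ↦ Nat.le_zero.1 ?_).trans_le (Nat.zero_le _)
    exact eccent_le_of_forall_dist_le fun w ↦ by rw [Subsingleton.elim w v, dist_self]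
  · intro V _ _ ih G hG
    classical
    obtain ⟨u, -, hu⟩ := exists_max_image univ (_root_.eccent G) univ_nonempty
    have hGu := hG.induce_ne_of_forall_eccent_le fun v ↦ hu v (mem_univ v)
    have hcard : Fintype.card {x | x ≠ u} = Fintype.card V - 1 := Set.card_ne_eq u
    have hpos := Fintype.card_pos (α := V)
    set n := Fintype.card V
    calc ∑ v, _root_.eccent G v
        ≤ ∑ x : {x | x ≠ u}, _root_.eccent (G.induce {x | x ≠ u}) x + (n - 1) + n / 2 :=
          sum_eccent_le_sum_eccent_induce_add hG hGu
      _ ≤ pathEccSum (n - 1) + (n - 1) + (n - 1 + 1) / 2 := by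
        gcongr
        · exact hcard ▸ ih _ (by omega) hGu
        · omega
      _ = pathEccSum n := by rw [← pathEccSum_succ, Nat.sub_add_cancel hpos]

section PathGraph

variable {n : ℕ}

lemma sub_le_length_of_walk_pathGraph {a b : Fin n} (p : (pathGraph n).Walk a b) :
    (b : ℕ) - a ≤ p.length := by
  induction p with
  | nil => simp
  | cons h _ ih =>
    rw [pathGraph_adj] at h
    rw [Walk.length_cons]
    omega

lemma sub_le_dist_pathGraph (a b : Fin n) : (b : ℕ) - a ≤ (pathGraph n).dist a b := by
  obtain ⟨p, hp⟩ := (pathGraph_preconnected n a b).exists_walk_length_eq_dist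
  exact hp ▸ sub_le_length_of_walk_pathGraph p

lemma dist_pathGraph_le {a b : Fin n} (hab : a ≤ b) : (pathGraph n).dist a b ≤ b - a := by
  obtain ⟨k, hk⟩ : ∃ k, (b : ℕ) = a + k := ⟨b - a, by omega⟩
  induction k generalizing b with
  | zero => simp [Fin.ext hk]
  | succ k ih =>
    let c : Fin n := ⟨a + k, by omega⟩
    have hcb : (pathGraph n).Adj c b := pathGraph_adj.2 (Or.inl (by simp [c, hk]; omega))
    calc (pathGraph n).dist a b ≤ (pathGraph n).dist a c + (pathGraph n).dist c b :=
          hcb.reachable.dist_triangle_right a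
      _ ≤ (c - a) + 1 :=
          add_le_add (ih (Fin.le_iff_val_le_val.2 (by simp [c])) rfl) (dist_eq_one_iff_adj.2 hcb).le
      _ = b - a := by simp [c, hk]

lemma eccent_pathGraph (a : Fin n) : _root_.eccent (pathGraph n) a = max (a : ℕ) (n - 1 - a) := by
  have hn : 0 < n := a.pos
  apply le_antisymm
  · refine eccent_le_of_forall_dist_le fun b ↦ ?_
    rcases le_total a b with hab | hba
    · have := dist_pathGraph_le hab
      omega
    · have := dist_pathGraph_le hba
      rw [dist_comm] at this
      omega
  · have h0 := (sub_le_dist_pathGraph ⟨0, hn⟩ a).trans (dist_comm ▸ dist_le_eccent a ⟨0, hn⟩)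
    have h1 := (sub_le_dist_pathGraph a ⟨n - 1, by omega⟩).trans (dist_le_eccent a _)
    simp only at h0 h1
    omega

lemma avec_pathGraph (n : ℕ) : avec (pathGraph n) = pathEccSum n / n := by
  rw [avec, finsum_eq_sum_of_fintype, Nat.card_eq_fintype_card, Fintype.card_fin, pathEccSum,
    Nat.cast_sum, ← Fin.sum_univ_eq_sum_range]
  simp only [eccent_pathGraph]

end PathGraph

lemma sum_mul_le_of_one_le_of_le {ι : Type*} [Fintype ι] {c e : ι → ℝ} {d : ℝ}
    (hc : ∀ i, 1 ≤ c i) (he : ∀ i, e i ≤ d) :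
    ∑ i, c i * e i ≤ (∑ i, c i) * d - (Fintype.card ι * d - ∑ i, e i) := by
  calc ∑ i, c i * e i ≤ ∑ i, (c i * d - (d - e i)) :=
        sum_le_sum fun i _ ↦ by nlinarith [hc i, he i]
    _ = _ := by simp only [sum_sub_distrib, sum_mul, sum_const, card_univ, nsmul_eq_mul]

theorem stmt_6 {V : Type*} [Fintype V] (G : SimpleGraph V) (hG : G.Connected)
    (c : V → ℝ) (hc : ∀ v, 1 ≤ c v) (N : ℝ) (hN : N = ∑ v, c v) :
    (∑ v, c v * (eccent G v : ℝ)) / N ≤ avec (pathGraph ⌈N⌉₊) := by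
  have : Nonempty V := hG.nonempty
  obtain ⟨u, -, hu⟩ := exists_max_image univ (_root_.eccent G) univ_nonempty
  have hd (v : V) : (_root_.eccent G v : ℝ) ≤ _root_.eccent G u := by
    exact_mod_cast hu v (mem_univ v)
  have hnN : (Fintype.card V : ℝ) ≤ N :=
    calc (Fintype.card V : ℝ) = ∑ _v : V, (1 : ℝ) := by simp
      _ ≤ N := hN ▸ sum_le_sum fun v _ ↦ hc v
  have hNm : N ≤ ⌈N⌉₊ := Nat.le_ceil N
  have hN0 : 0 < N := (Nat.cast_pos.2 Fintype.card_pos).trans_le hnN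
  have htotal : ∑ v, (_root_.eccent G v : ℝ) ≤ pathEccSum (Fintype.card V) := by
    exact_mod_cast sum_eccent_le_pathEccSum hG
  have hmono : (pathEccSum (Fintype.card V) + ⌈N⌉₊ * _root_.eccent G u : ℝ)
      ≤ pathEccSum ⌈N⌉₊ + Fintype.card V * _root_.eccent G u := by
    exact_mod_cast pathEccSum_add_mul_le (hG.eccent_lt_card u) (by exact_mod_cast hnN.trans hNm)
  have hsmall : ∑ v, c v * (_root_.eccent G v : ℝ) ≤ N * _root_.eccent G u := by
    rw [hN, sum_mul]
    exact sum_le_sum fun v _ ↦ mul_le_mul_of_nonneg_left (hd v) (zero_le_one.trans (hc v))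
  have hlarge : ∑ v, c v * (_root_.eccent G v : ℝ)
      ≤ N * _root_.eccent G u - (⌈N⌉₊ * _root_.eccent G u - pathEccSum ⌈N⌉₊) := by
    linarith [hN ▸ sum_mul_le_of_one_le_of_le hc hd]
  rw [avec_pathGraph, div_le_div_iff₀ hN0 (hN0.trans_le hNm)]
  linarith [mul_le_mul_of_nonneg_left hsmall (sub_nonneg.2 hNm),
    mul_le_mul_of_nonneg_left hlarge hN0.le]
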